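/- Let G be a finite connected simple graph and let ℓ(G) be the length (number of edges) of a longest path in G. Then the Laplacian matching polynomial 𝓛𝓜(G, x) has at least ℓ(G) distinct positive real roots. -/

import Mathlib

/-!
Write `Q s` for the Laplacian matching polynomial of the subgraph induced on a vertex set `s`,
with the degrees `d v` taken in `G`. Splitting the matchings according to whether they cover a
vertex `v ∈ s` gives `Q s = (X - d v) Q (s - v) - ∑ Q (s - v - u)`, the sum running over the
neighbours `u` of `v` in `s`; that is,
`Q s / Q (s - v) = X - d v - ∑ Q (s - v - u) / Q (s - v)`.
By induction on `s`, `Q (s - v) / Q s = ∑ c θ / (X - θ)` with all residues `c θ > 0`: a sum of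
such functions is again one, and if `F` has this form with poles `Θ`, then `X - a - F` increases
from `-∞` to `+∞` between consecutive poles, so `1 / (X - a - F)` again has this form, with
`#Θ + 1` poles interlacing `Θ`. Along a path `v = v₀, v₁, …, vₗ` in `s` the poles of
`Q (s - v) / Q s` therefore number at least `ℓ + 1`, and they are roots of `Q s`. All roots of
`Q s` are nonnegative, since `(-1) ^ #s Q s (x) > 0` for `x < 0`, so at most one of them is `0`.
-/

namespace LM

open Finset

variable {V : Type*}

/-- The set of matchings of `G`, as finsets of edges that pairwise share no vertex. -/
def matchings [Fintype V] [DecidableEq V] (G : SimpleGraph V) [DecidableRel G.Adj] :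
    Finset (Finset (Sym2 V)) :=
  G.edgeFinset.powerset.filter
    (fun M => ∀ e ∈ M, ∀ f ∈ M, e ≠ f → ∀ w : V, w ∈ e → w ∉ f)

/-- The set of vertices covered by a set of edges. -/
def covered [Fintype V] [DecidableEq V] (M : Finset (Sym2 V)) : Finset V :=
  Finset.univ.filter (fun v => ∃ e ∈ M, v ∈ e)

/-- The multivariate matching polynomial `𝔐(G, x_G)`. -/
noncomputable def mvMatch [Fintype V] [DecidableEq V] (G : SimpleGraph V)
    [DecidableRel G.Adj] : MvPolynomial V ℝ :=
  ∑ M ∈ matchings G, (-1 : MvPolynomial V ℝ) ^ M.card *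
    ∏ v ∈ Finset.univ \ covered M, MvPolynomial.X v

/-- The matching polynomial `𝓜(G, x)`. -/
noncomputable def matchPoly [Fintype V] [DecidableEq V] (G : SimpleGraph V)
    [DecidableRel G.Adj] : Polynomial ℝ :=
  ∑ M ∈ matchings G, (-1 : Polynomial ℝ) ^ M.card *
    Polynomial.X ^ (Fintype.card V - 2 * M.card)

/-- The Laplacian matching polynomial `𝓛𝓜(G, x)`. -/
noncomputable def lapMatch [Fintype V] [DecidableEq V] (G : SimpleGraph V)
    [DecidableRel G.Adj] : Polynomial ℝ :=
  ∑ M ∈ matchings G, (-1 : Polynomial ℝ) ^ M.card *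
    ∏ v ∈ Finset.univ \ covered M, (Polynomial.X - Polynomial.C (G.degree v : ℝ))

/-- The largest real root of a polynomial (`sSup` of its set of real roots). -/
noncomputable def lroot (p : Polynomial ℝ) : ℝ := sSup {x : ℝ | p.IsRoot x}

instance instDecidableRelInduceAdj (G : SimpleGraph V) [DecidableRel G.Adj] (s : Set V) :
    DecidableRel (G.induce s).Adj := fun a b =>
  inferInstanceAs (Decidable (G.Adj a b))

open Polynomial Lagrange

lemma neg_one_pow_mul_eval_nodal_pos {K : Type*} [Field K] [LinearOrder K] [IsStrictOrderedRing K]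
    {S : Finset K} {x : K} (hx : x ∉ S) :
    0 < (-1) ^ #(S.filter (x < ·)) * (nodal S id).eval x := by
  induction S using Finset.induction_on with
  | empty => simp
  | insert t S ht ih =>
    rw [mem_insert, not_or] at hx
    have hpos := ih hx.2
    rw [nodal_insert_eq_nodal ht, eval_mul, filter_insert, eval_sub, eval_X, eval_C, id]
    rcases lt_or_gt_of_ne hx.1 with h | h
    · rw [if_pos h, card_insert_of_notMem fun h' => ht (mem_filter.1 h').1, pow_succ]
      nlinarith
    · rw [if_neg h.not_gt]
      nlinarith

lemma eval_nodal_of_mem {K : Type*} [Field K] {S : Finset K} {x : K} (hx : x ∈ S) :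
    (nodal S id).eval x = 0 :=
  eval_nodal_at_node (v := id) hx

lemma eval_nodal_ne_zero {K : Type*} [Field K] {S : Finset K} {x : K} (hx : x ∉ S) :
    (nodal S id).eval x ≠ 0 :=
  eval_nodal_not_at_node fun _ hi h => hx (h ▸ hi)

/-- The hypothesis `hS` says that `f` alternates in sign along `S`, being positive at `max S`. -/
theorem card_le_card_roots_filter_lt_add_one {f : ℝ[X]} {S : Finset ℝ} {b : ℝ}
    (hb : ∀ x ∈ S, x ≤ b) (hS : ∀ x ∈ S, 0 < (-1) ^ #(S.filter (x < ·)) * f.eval x) :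
    #S ≤ #(f.roots.toFinset.filter (· < b)) + 1 := by
  induction S using Finset.induction_on_max generalizing f b with
  | empty => simp
  | insert a T hlt ih =>
    rcases T.eq_empty_or_nonempty with rfl | hT
    · simp
    have haT : a ∉ T := fun h => (hlt a h).false
    have hfilter : ∀ x ∈ T, (insert a T).filter (x < ·) = insert a (T.filter (x < ·)) :=
      fun x hx => by rw [filter_insert, if_pos (hlt x hx)]
    set t := T.max' hT
    have hta : t < a := hlt t (T.max'_mem hT)
    have hfa : 0 < f.eval a := by
      have : (insert a T).filter (a < ·) = ∅ := filter_eq_empty_iff.2 fun y hy => by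
        rcases mem_insert.1 hy with rfl | hy
        exacts [lt_irrefl _, (hlt y hy).not_gt]
      simpa [this] using hS a (mem_insert_self a T)
    have hft : f.eval t < 0 := by
      have := hS t (mem_insert_of_mem (T.max'_mem hT))
      rw [hfilter t (T.max'_mem hT), filter_eq_empty_iff.2 fun y hy => (T.le_max' y hy).not_gt]
        at this
      simpa using this
    obtain ⟨r, ⟨htr, hra⟩, hr⟩ :=
      intermediate_value_Ioo hta.le f.continuous.continuousOn ⟨hft, hfa⟩
    have hf : f ≠ 0 := by rintro rfl; simp at hfa
    -- on `T` the signs are those of `-f`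
    have ih' := ih (f := -f) (b := t) (fun x hx => T.le_max' x hx) fun x hx => by
      have := hS x (mem_insert_of_mem hx)
      rw [hfilter x hx, card_insert_of_notMem fun h => haT (mem_filter.1 h).1, pow_succ] at this
      simpa [mul_comm, mul_left_comm] using this
    rw [roots_neg] at ih'
    have hab := hb a (mem_insert_self a T)
    have hsub : insert r (f.roots.toFinset.filter (· < t)) ⊆ f.roots.toFinset.filter (· < b) := by
      intro y hy
      rcases mem_insert.1 hy with rfl | hy
      · simpa [hf, hr] using hra.trans_le hab
      · rw [mem_filter] at hy ⊢
        exact ⟨hy.1, hy.2.trans_le (hta.le.trans hab)⟩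
    have := card_le_card hsub
    rw [card_insert_of_notMem (by simp [htr.le.not_gt])] at this
    rw [card_insert_of_notMem haT]
    omega

/-- The sign pattern of a monic polynomial of degree `#Θ + 1` whose roots interlace `Θ`. -/
theorem card_add_one_le_card_roots_of_sign {f : ℝ[X]} {Θ : Finset ℝ} {a b : ℝ} (hab : a < b)
    (ha : ∀ θ ∈ Θ, a < θ) (hb : ∀ θ ∈ Θ, θ < b) (hfa : 0 < (-1) ^ (#Θ + 1) * f.eval a)
    (hfb : 0 < f.eval b) (hfΘ : ∀ θ ∈ Θ, 0 < (-1) ^ (#(Θ.filter (θ < ·)) + 1) * f.eval θ) :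
    #Θ + 1 ≤ #f.roots.toFinset := by
  have hbΘ : b ∉ Θ := fun h => (hb b h).false
  have haΘ : a ∉ insert b Θ := by
    rw [mem_insert, not_or]
    exact ⟨hab.ne, fun h => (ha a h).false⟩
  have key := card_le_card_roots_filter_lt_add_one (f := f) (S := insert a (insert b Θ)) (b := b)
    (fun x hx => by
      rcases mem_insert.1 hx with rfl | hx
      · exact hab.le
      rcases mem_insert.1 hx with rfl | hx
      exacts [le_rfl, (hb x hx).le])
    (fun x hx => by
      rcases mem_insert.1 hx with rfl | hx
      · rwa [filter_insert, if_neg (lt_irrefl x), filter_true_of_mem fun y hy => by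
          rcases mem_insert.1 hy with rfl | hy
          exacts [hab, ha y hy], card_insert_of_notMem hbΘ]
      rcases mem_insert.1 hx with rfl | hx
      · rwa [filter_eq_empty_iff.2 fun y hy => by
          rcases mem_insert.1 hy with rfl | hy
          · exact hab.le.not_gt
          rcases mem_insert.1 hy with rfl | hy
          exacts [lt_irrefl _, (hb y hy).not_gt], card_empty, pow_zero, one_mul]
      · rw [filter_insert, if_neg (ha x hx).not_gt, filter_insert, if_pos (hb x hx),
          card_insert_of_notMem fun h => hbΘ (mem_filter.1 h).1]
        exact hfΘ x hx)
  have := card_filter_le f.roots.toFinset (· < b)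
  rw [card_insert_of_notMem haΘ, card_insert_of_notMem hbΘ] at key
  omega

lemma _root_.Polynomial.Monic.eventually_pos_atTop {f : ℝ[X]} (hf : f.Monic) :
    ∀ᶠ x in Filter.atTop, 0 < f.eval x :=
  (isEquivalent_atTop_lead f).eventually_pos <| by
    filter_upwards [Filter.eventually_gt_atTop 0] with x hx
    rw [hf.leadingCoeff, one_mul]
    positivity

lemma _root_.Polynomial.Monic.eventually_neg_one_pow_mul_pos_atBot {f : ℝ[X]} (hf : f.Monic) :
    ∀ᶠ x in Filter.atBot, 0 < (-1) ^ f.natDegree * f.eval x :=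
  ((Asymptotics.IsEquivalent.refl (u := fun _ => (-1 : ℝ) ^ f.natDegree)).mul
      (isEquivalent_atBot_lead f)).eventually_pos <| by
    filter_upwards [Filter.eventually_lt_atBot 0] with x hx
    simp only [Pi.mul_apply, hf.leadingCoeff, one_mul, ← mul_pow]
    exact pow_pos (by linarith) _

lemma _root_.Polynomial.Monic.eq_nodal_roots_toFinset {R : Type*} [CommRing R] [IsDomain R]
    [DecidableEq R] {f : R[X]} (hf : f.Monic) (h : f.natDegree ≤ #f.roots.toFinset) :
    f = nodal f.roots.toFinset id := by
  have hcard : #f.roots.toFinset = Multiset.card f.roots :=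
    le_antisymm (Multiset.toFinset_card_le _) ((card_roots' f).trans h)
  have hsplit : Multiset.card f.roots = f.natDegree :=
    le_antisymm (card_roots' f) (h.trans hcard.le)
  conv_lhs => rw [← C_leadingCoeff_mul_prod_multiset_X_sub_C hsplit, hf.leadingCoeff, C_1, one_mul]
  rw [nodal, prod_eq_multiset_prod, Multiset.toFinset_val,
    Multiset.dedup_eq_self.2 (Multiset.toFinset_card_eq_card_iff_nodup.1 hcard)]
  rfl

/-- The numerator of `∑ θ ∈ Θ, c θ / (X - θ)` over the denominator `nodal Θ id`. -/
noncomputable def pfNum (Θ : Finset ℝ) (c : ℝ → ℝ) : ℝ[X] :=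
  ∑ θ ∈ Θ, C (c θ) * nodal (Θ.erase θ) id

lemma eval_pfNum_of_mem {Θ : Finset ℝ} (c : ℝ → ℝ) {θ : ℝ} (hθ : θ ∈ Θ) :
    (pfNum Θ c).eval θ = c θ * (nodal (Θ.erase θ) id).eval θ := by
  rw [pfNum, eval_finsetSum, sum_eq_single θ (fun θ' _ hne => by
      rw [eval_mul, eval_nodal_of_mem (mem_erase.2 ⟨Ne.symm hne, hθ⟩), mul_zero])
    (fun h => (h hθ).elim), eval_mul, eval_C]

lemma degree_pfNum_lt (Θ : Finset ℝ) (c : ℝ → ℝ) : (pfNum Θ c).degree < #Θ := by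
  refine (degree_sum_le _ _).trans_lt ((Finset.sup_lt_iff (WithBot.bot_lt_coe _)).2 fun θ hθ => ?_)
  calc (C (c θ) * nodal (Θ.erase θ) id).degree ≤ (nodal (Θ.erase θ) id).degree := by
        rw [← smul_eq_C_mul]
        exact degree_smul_le _ _
    _ < #Θ := by
        rw [degree_nodal, ← card_erase_add_one hθ]
        exact_mod_cast Nat.lt_succ_self _

lemma pfNum_sum {ι : Type*} (Θ : Finset ℝ) (I : Finset ι) (c : ι → ℝ → ℝ) :
    pfNum Θ (fun θ => ∑ i ∈ I, c i θ) = ∑ i ∈ I, pfNum Θ (c i) := by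
  simp only [pfNum, map_sum, sum_mul]
  exact sum_comm

lemma pfNum_ite_eq {Θ T : Finset ℝ} (hΘT : Θ ⊆ T) (c : ℝ → ℝ) :
    pfNum T (fun θ => if θ ∈ Θ then c θ else 0) = nodal (T \ Θ) id * pfNum Θ c := by
  rw [pfNum, pfNum, mul_sum, ← sum_subset hΘT fun θ _ hθ => by rw [if_neg hθ, C_0, zero_mul]]
  refine sum_congr rfl fun θ hθ => ?_
  have : T.erase θ = (T \ Θ) ∪ Θ.erase θ := by
    ext x
    simp only [mem_erase, mem_union, mem_sdiff]
    constructor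
    · rintro ⟨hx, hxT⟩
      by_cases hxΘ : x ∈ Θ <;> simp [*]
    · rintro (⟨hxT, hxΘ⟩ | ⟨hx, hxΘ⟩)
      exacts [⟨fun h => hxΘ (h ▸ hθ), hxT⟩, ⟨hx, hΘT hxΘ⟩]
  rw [if_pos hθ, this, nodal, nodal, nodal, prod_union (disjoint_left.2 fun x hx hx' =>
    (mem_sdiff.1 hx).2 (mem_of_mem_erase hx'))]
  ring

/-- Lagrange interpolation on the nodes `Ξ`, written as a partial fraction numerator. -/
lemma eq_pfNum_of_degree_lt {g : ℝ[X]} {Ξ : Finset ℝ} (hg : g.degree < #Ξ) :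
    g = pfNum Ξ (fun ξ => g.eval ξ * nodalWeight Ξ id ξ) := by
  calc g = interpolate Ξ id (fun ξ => g.eval ξ) := eq_interpolate (Set.injOn_id _) hg
    _ = _ := by
      rw [interpolate_apply, pfNum]
      refine sum_congr rfl fun ξ hξ => ?_
      rw [basis_eq_prod_sub_inv_mul_nodal_div hξ, ← nodal_erase_eq_nodal_div hξ, C_mul]
      ring

/-- The numerator of `X - a - ∑ θ ∈ Θ, c θ / (X - θ)` over the denominator `nodal Θ id`. -/
noncomputable def contFracNum (Θ : Finset ℝ) (c : ℝ → ℝ) (a : ℝ) : ℝ[X] :=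
  (X - C a) * nodal Θ id - pfNum Θ c

lemma degree_pfNum_lt_degree (Θ : Finset ℝ) (c : ℝ → ℝ) (a : ℝ) :
    (pfNum Θ c).degree < ((X - C a) * nodal Θ id).degree := by
  rw [degree_mul, degree_X_sub_C, degree_nodal]
  refine (degree_pfNum_lt Θ c).trans ?_
  exact_mod_cast (by omega : #Θ < 1 + #Θ)

lemma contFracNum_monic (Θ : Finset ℝ) (c : ℝ → ℝ) (a : ℝ) : (contFracNum Θ c a).Monic :=
  ((monic_X_sub_C a).mul nodal_monic).sub_of_left (degree_pfNum_lt_degree Θ c a)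

lemma natDegree_contFracNum (Θ : Finset ℝ) (c : ℝ → ℝ) (a : ℝ) :
    (contFracNum Θ c a).natDegree = #Θ + 1 := by
  rw [contFracNum, natDegree_eq_of_degree_eq (degree_sub_eq_left_of_degree_lt
    (degree_pfNum_lt_degree Θ c a)), natDegree_mul (X_sub_C_ne_zero a) nodal_ne_zero,
    natDegree_X_sub_C, natDegree_nodal, add_comm]

lemma eval_contFracNum_of_mem {Θ : Finset ℝ} (c : ℝ → ℝ) (a : ℝ) {θ : ℝ} (hθ : θ ∈ Θ) :
    (contFracNum Θ c a).eval θ = -(c θ * (nodal (Θ.erase θ) id).eval θ) := by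
  rw [contFracNum, eval_sub, eval_mul, eval_nodal_of_mem hθ, mul_zero, zero_sub,
    eval_pfNum_of_mem c hθ]

lemma sign_eval_contFracNum_of_mem {Θ : Finset ℝ} {c : ℝ → ℝ} (hc : ∀ θ ∈ Θ, 0 < c θ) (a : ℝ)
    {θ : ℝ} (hθ : θ ∈ Θ) :
    0 < (-1) ^ (#(Θ.filter (θ < ·)) + 1) * (contFracNum Θ c a).eval θ := by
  have h := neg_one_pow_mul_eval_nodal_pos (notMem_erase θ Θ)
  rw [filter_erase, erase_eq_of_notMem (by simp)] at h
  rw [eval_contFracNum_of_mem c a hθ, pow_succ]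
  nlinarith [hc θ hθ]

lemma card_add_one_le_card_roots_contFracNum {Θ : Finset ℝ} {c : ℝ → ℝ}
    (hc : ∀ θ ∈ Θ, 0 < c θ) (a : ℝ) : #Θ + 1 ≤ #(contFracNum Θ c a).roots.toFinset := by
  have hf := contFracNum_monic Θ c a
  obtain ⟨b, hfb, hΘb⟩ := (hf.eventually_pos_atTop.and
    ((Filter.eventually_all_finset Θ).2 fun θ _ => Filter.eventually_gt_atTop θ)).exists
  obtain ⟨a₀, ⟨hfa₀, hΘa₀⟩, ha₀b⟩ := ((hf.eventually_neg_one_pow_mul_pos_atBot.and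
    ((Filter.eventually_all_finset Θ).2 fun θ _ => Filter.eventually_lt_atBot θ)).and
    (Filter.eventually_lt_atBot b)).exists
  rw [natDegree_contFracNum] at hfa₀
  exact card_add_one_le_card_roots_of_sign ha₀b hΘa₀ hΘb hfa₀ hfb
    fun θ hθ => sign_eval_contFracNum_of_mem hc a hθ

/-- The Wronskian of the numerator and the denominator of `X - a - ∑ c θ / (X - θ)`; up to the
factor `(nodal Θ id) ^ 2` this is the derivative `1 + ∑ c θ / (X - θ) ^ 2`. -/
lemma derivative_contFracNum_mul_sub (Θ : Finset ℝ) (c : ℝ → ℝ) (a : ℝ) :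
    derivative (contFracNum Θ c a) * nodal Θ id - contFracNum Θ c a * derivative (nodal Θ id)
      = nodal Θ id ^ 2 + ∑ θ ∈ Θ, C (c θ) * nodal (Θ.erase θ) id ^ 2 := by
  have hterm : ∀ θ ∈ Θ, C (c θ) * (derivative (nodal (Θ.erase θ) id) * nodal Θ id
      - nodal (Θ.erase θ) id * derivative (nodal Θ id))
        = -(C (c θ) * nodal (Θ.erase θ) id ^ 2) := fun θ hθ => by
    rw [nodal_eq_mul_nodal_erase hθ, derivative_mul]
    simp only [derivative_sub, derivative_X, derivative_C, sub_zero, id]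
    ring
  have hsum := sum_congr rfl hterm
  simp only [mul_sub, sum_sub_distrib, sum_neg_distrib, ← mul_assoc, ← sum_mul] at hsum
  simp only [contFracNum, pfNum, derivative_sub, derivative_mul, derivative_X, derivative_C,
    derivative_sum, sub_zero, zero_mul, zero_add, one_mul]
  linear_combination (-1 : ℝ[X]) * hsum

lemma eval_derivative_mul_eval_nodal_pos {Θ : Finset ℝ} {c : ℝ → ℝ} (hc : ∀ θ ∈ Θ, 0 < c θ)
    {a ξ : ℝ} (hξ : (contFracNum Θ c a).IsRoot ξ) :
    0 < (derivative (contFracNum Θ c a)).eval ξ * (nodal Θ id).eval ξ := by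
  have hξΘ : ξ ∉ Θ := fun h => by
    simpa [hξ.eq_zero] using sign_eval_contFracNum_of_mem hc a h
  have hW := congrArg (eval ξ) (derivative_contFracNum_mul_sub Θ c a)
  simp only [eval_sub, eval_mul, eval_add, eval_pow, eval_finsetSum, eval_C, hξ.eq_zero,
    zero_mul, sub_zero] at hW
  rw [hW]
  have := eval_nodal_ne_zero hξΘ
  have : 0 ≤ ∑ θ ∈ Θ, c θ * (nodal (Θ.erase θ) id).eval ξ ^ 2 :=
    sum_nonneg fun θ hθ => mul_nonneg (hc θ hθ).le (sq_nonneg _)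
  positivity

/-- One step of the continued fraction: `1 / (X - a - ∑ θ ∈ Θ, c θ / (X - θ))` is
`∑ ξ ∈ Ξ, d ξ / (X - ξ)` with one pole more and again positive residues. -/
theorem exists_contFracNum_eq_nodal {Θ : Finset ℝ} {c : ℝ → ℝ} (hc : ∀ θ ∈ Θ, 0 < c θ) (a : ℝ) :
    ∃ (Ξ : Finset ℝ) (d : ℝ → ℝ), #Ξ = #Θ + 1 ∧ (∀ ξ ∈ Ξ, 0 < d ξ) ∧
      contFracNum Θ c a = nodal Ξ id ∧ nodal Θ id = pfNum Ξ d := by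
  set Ξ := (contFracNum Θ c a).roots.toFinset
  have hΞ : contFracNum Θ c a = nodal Ξ id := (contFracNum_monic Θ c a).eq_nodal_roots_toFinset
    (by rw [natDegree_contFracNum]; exact card_add_one_le_card_roots_contFracNum hc a)
  have hcard : #Ξ = #Θ + 1 := by
    rw [← natDegree_nodal (v := (id : ℝ → ℝ)), ← hΞ, natDegree_contFracNum]
  refine ⟨Ξ, _, hcard, fun ξ hξ => ?_, hΞ,
    eq_pfNum_of_degree_lt (by rw [degree_nodal, hcard]; exact_mod_cast Nat.lt_succ_self _)⟩
  have hpos := eval_derivative_mul_eval_nodal_pos hc (a := a) (ξ := ξ)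
    (by rw [IsRoot, hΞ]; exact eval_nodal_of_mem hξ)
  rw [nodalWeight_eq_eval_derivative_nodal hξ, id, ← hΞ]
  rcases mul_pos_iff.1 hpos with ⟨h1, h2⟩ | ⟨h1, h2⟩
  · exact mul_pos h2 (inv_pos.2 h1)
  · exact mul_pos_of_neg_of_neg h2 (inv_lt_zero.2 h1)

/-- `q / p = ∑ θ ∈ Θ, c θ / (X - θ)`, with positive residues. -/
structure PosPartialFrac (q p : ℝ[X]) (Θ : Finset ℝ) (c : ℝ → ℝ) : Prop where
  mul_nodal_eq : q * nodal Θ id = p * pfNum Θ c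
  pos : ∀ θ ∈ Θ, 0 < c θ

lemma PosPartialFrac.isRoot {q p : ℝ[X]} {Θ : Finset ℝ} {c : ℝ → ℝ}
    (h : PosPartialFrac q p Θ c) {θ : ℝ} (hθ : θ ∈ Θ) : p.IsRoot θ := by
  have := congrArg (eval θ) h.mul_nodal_eq
  rw [eval_mul, eval_mul, eval_nodal_of_mem hθ, mul_zero, eval_pfNum_of_mem c hθ] at this
  exact (mul_eq_zero.1 this.symm).resolve_right
    (mul_ne_zero (h.pos θ hθ).ne' (eval_nodal_ne_zero (notMem_erase θ Θ)))

lemma PosPartialFrac.sum {ι : Type*} {I : Finset ι} {q : ι → ℝ[X]} {p : ℝ[X]}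
    {Θ : ι → Finset ℝ} {c : ι → ℝ → ℝ} (h : ∀ i ∈ I, PosPartialFrac (q i) p (Θ i) (c i)) :
    PosPartialFrac (∑ i ∈ I, q i) p (I.biUnion Θ)
      (fun θ => ∑ i ∈ I, if θ ∈ Θ i then c i θ else 0) where
  mul_nodal_eq := by
    rw [pfNum_sum, mul_sum, sum_mul]
    refine sum_congr rfl fun i hi => ?_
    have hsub : Θ i ⊆ I.biUnion Θ := subset_biUnion_of_mem Θ hi
    rw [pfNum_ite_eq hsub, nodal, ← prod_sdiff hsub, ← nodal, ← nodal, ← mul_assoc,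
      mul_comm (q i), mul_assoc, (h i hi).mul_nodal_eq]
    ring
  pos θ hθ := by
    obtain ⟨i, hi, hθi⟩ := mem_biUnion.1 hθ
    refine sum_pos' (fun j hj => ?_) ⟨i, hi, by rw [if_pos hθi]; exact (h i hi).pos θ hθi⟩
    split_ifs with hθj
    exacts [((h j hj).pos θ hθj).le, le_rfl]

lemma PosPartialFrac.step {q p : ℝ[X]} {Θ : Finset ℝ} {c : ℝ → ℝ}
    (h : PosPartialFrac q p Θ c) (a : ℝ) :
    ∃ (Ξ : Finset ℝ) (d : ℝ → ℝ), #Ξ = #Θ + 1 ∧ PosPartialFrac p ((X - C a) * p - q) Ξ d := by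
  obtain ⟨Ξ, d, hcard, hd, hΞ, hΘ⟩ := exists_contFracNum_eq_nodal h.pos a
  refine ⟨Ξ, d, hcard, ⟨?_, hd⟩⟩
  rw [← hΘ, ← hΞ, contFracNum]
  linear_combination h.mul_nodal_eq

lemma card_filter_adj_le_degree {G : SimpleGraph V} [Fintype V] [DecidableRel G.Adj]
    (s : Finset V) (v : V) : #(s.filter (G.Adj v)) ≤ G.degree v := by
  rw [← G.card_neighborFinset_eq_degree]
  exact card_le_card fun y hy => (G.mem_neighborFinset v y).2 (mem_filter.1 hy).2

lemma card_filter_adj_add_one_le_degree {G : SimpleGraph V} [Fintype V] [DecidableEq V]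
    [DecidableRel G.Adj] {s : Finset V} {v w : V} (hw : w ∉ s) (hvw : G.Adj v w) :
    #(s.filter (G.Adj v)) + 1 ≤ G.degree v := by
  rw [← G.card_neighborFinset_eq_degree, ← card_insert_of_notMem fun h => hw (mem_filter.1 h).1]
  refine card_le_card (insert_subset ((G.mem_neighborFinset v w).2 hvw) fun y hy => ?_)
  exact (G.mem_neighborFinset v y).2 (mem_filter.1 hy).2

section Graph

variable [Fintype V] [DecidableEq V] (G : SimpleGraph V) [DecidableRel G.Adj]

def matchingsOn (s : Finset V) : Finset (Finset (Sym2 V)) :=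
  (matchings G).filter (covered · ⊆ s)

noncomputable def matchingTerm (s : Finset V) (M : Finset (Sym2 V)) : ℝ[X] :=
  (-1) ^ #M * ∏ v ∈ s \ covered M, (X - C (G.degree v : ℝ))

/-- The Laplacian matching polynomial of the subgraph induced on `s`, but with the degrees
taken in `G`. -/
noncomputable def lapMatchOn (s : Finset V) : ℝ[X] :=
  ∑ M ∈ matchingsOn G s, matchingTerm G s M

noncomputable def signedEval (s : Finset V) (x : ℝ) : ℝ := (-1) ^ #s * (lapMatchOn G s).eval x

lemma lapMatch_eq_lapMatchOn_univ : lapMatch G = lapMatchOn G univ := by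
  rw [lapMatchOn, matchingsOn, filter_true_of_mem fun _ _ => subset_univ _]
  rfl

variable {G}

lemma mem_matchings {M : Finset (Sym2 V)} :
    M ∈ matchings G ↔ M ⊆ G.edgeFinset ∧ ∀ e ∈ M, ∀ f ∈ M, e ≠ f → ∀ w ∈ e, w ∉ f := by
  simp [matchings]

lemma mem_matchingsOn {s : Finset V} {M : Finset (Sym2 V)} :
    M ∈ matchingsOn G s ↔ M ∈ matchings G ∧ covered M ⊆ s :=
  mem_filter

lemma mem_covered {M : Finset (Sym2 V)} {x : V} : x ∈ covered M ↔ ∃ e ∈ M, x ∈ e := by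
  simp [covered]

lemma covered_insert_mk {M : Finset (Sym2 V)} {v u : V} :
    covered (insert s(v, u) M) = insert v (insert u (covered M)) := by
  ext x
  simp [mem_covered, or_assoc]

lemma mk_notMem_of_notMem_covered {M : Finset (Sym2 V)} {v u : V} (hv : v ∉ covered M) :
    s(v, u) ∉ M :=
  fun h => hv (mem_covered.2 ⟨_, h, Sym2.mem_mk_left v u⟩)

lemma notMem_covered_of_mem_matchingsOn_erase {s : Finset V} {M : Finset (Sym2 V)} {v u : V}
    (hM : M ∈ matchingsOn G ((s.erase v).erase u)) : v ∉ covered M :=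
  fun h => by simpa using (mem_matchingsOn.1 hM).2 h

lemma insert_mem_matchingsOn {s : Finset V} {M : Finset (Sym2 V)} {v u : V} (hadj : G.Adj v u)
    (hv : v ∈ s) (hu : u ∈ s) (hM : M ∈ matchingsOn G ((s.erase v).erase u)) :
    insert s(v, u) M ∈ matchingsOn G s := by
  obtain ⟨⟨hMG, hMdisj⟩, hMs⟩ := (mem_matchingsOn.1 hM).imp_left mem_matchings.1
  have hfree : ∀ f ∈ M, ∀ w ∈ f, w ≠ u ∧ w ≠ v ∧ w ∈ s := fun f hf w hw => by
    simpa using hMs (mem_covered.2 ⟨f, hf, hw⟩)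
  refine mem_matchingsOn.2 ⟨mem_matchings.2 ⟨insert_subset (by simpa using hadj) hMG, ?_⟩, ?_⟩
  · simp only [mem_insert]
    rintro e (rfl | he) f (rfl | hf) hef w hwe hwf
    · exact hef rfl
    · exact (Sym2.mem_iff.1 hwe).elim (hfree f hf w hwf).2.1 (hfree f hf w hwf).1
    · exact (Sym2.mem_iff.1 hwf).elim (hfree e he w hwe).2.1 (hfree e he w hwe).1
    · exact hMdisj e he f hf hef w hwe hwf
  · rw [covered_insert_mk]
    exact insert_subset hv <| insert_subset hu fun x hx =>
      mem_of_mem_erase (mem_of_mem_erase (hMs hx))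

lemma erase_mem_matchingsOn {s : Finset V} {M : Finset (Sym2 V)} {v u : V}
    (hM : M ∈ matchingsOn G s) (he : s(v, u) ∈ M) :
    M.erase s(v, u) ∈ matchingsOn G ((s.erase v).erase u) := by
  obtain ⟨⟨hMG, hMdisj⟩, hMs⟩ := (mem_matchingsOn.1 hM).imp_left mem_matchings.1
  refine mem_matchingsOn.2 ⟨mem_matchings.2 ⟨(erase_subset _ _).trans hMG, fun e he' f hf =>
    hMdisj e (mem_of_mem_erase he') f (mem_of_mem_erase hf)⟩, fun x hx => ?_⟩
  obtain ⟨f, hf, hxf⟩ := mem_covered.1 hx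
  obtain ⟨hfe, hfM⟩ := mem_erase.1 hf
  have hdisj := hMdisj _ he f hfM (Ne.symm hfe)
  simp only [mem_erase]
  exact ⟨fun h => hdisj u (Sym2.mem_mk_right v u) (h ▸ hxf),
    fun h => hdisj v (Sym2.mem_mk_left v u) (h ▸ hxf), hMs (mem_covered.2 ⟨f, hfM, hxf⟩)⟩

lemma eq_of_insert_mk_eq_insert_mk {M₁ M₂ : Finset (Sym2 V)} {v u₁ u₂ : V}
    (h₁ : v ∉ covered M₁) (h₂ : v ∉ covered M₂) (h : insert s(v, u₁) M₁ = insert s(v, u₂) M₂) :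
    u₁ = u₂ ∧ M₁ = M₂ := by
  have hu : u₁ = u₂ := by
    rcases mem_insert.1 (h ▸ mem_insert_self s(v, u₂) M₂) with h' | h'
    · exact (Sym2.congr_right.1 h').symm
    · exact (mk_notMem_of_notMem_covered h₁ h').elim
  subst hu
  refine ⟨rfl, ?_⟩
  rw [← erase_insert (mk_notMem_of_notMem_covered (u := u₁) h₁), h,
    erase_insert (mk_notMem_of_notMem_covered h₂)]

lemma matchingTerm_insert_mk {s : Finset V} {M : Finset (Sym2 V)} {v u : V}
    (hM : M ∈ matchingsOn G ((s.erase v).erase u)) :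
    matchingTerm G s (insert s(v, u) M) = -matchingTerm G ((s.erase v).erase u) M := by
  have hset : s \ covered (insert s(v, u) M) = ((s.erase v).erase u) \ covered M := by
    ext x
    simp only [covered_insert_mk, mem_sdiff, mem_insert, mem_erase]
    tauto
  rw [matchingTerm, matchingTerm, card_insert_of_notMem (mk_notMem_of_notMem_covered
    (notMem_covered_of_mem_matchingsOn_erase hM)), hset, pow_succ]
  ring

lemma sum_matchingTerm_filter_notMem_covered {s : Finset V} {v : V} (hv : v ∈ s) :
    ∑ M ∈ (matchingsOn G s).filter (v ∉ covered ·), matchingTerm G s M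
      = (X - C (G.degree v : ℝ)) * lapMatchOn G (s.erase v) := by
  have hfilter : (matchingsOn G s).filter (v ∉ covered ·) = matchingsOn G (s.erase v) := by
    ext M
    simp only [mem_filter, mem_matchingsOn, subset_erase, and_assoc]
  rw [hfilter, lapMatchOn, mul_sum]
  refine sum_congr rfl fun M hM => ?_
  have hvM : v ∈ s \ covered M := mem_sdiff.2 ⟨hv, (subset_erase.1 (mem_matchingsOn.1 hM).2).2⟩
  rw [matchingTerm, matchingTerm, ← mul_prod_erase _ _ hvM, erase_sdiff_comm]
  ring

lemma sum_matchingTerm_filter_mem_covered {s : Finset V} {v : V} (hv : v ∈ s) :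
    ∑ M ∈ (matchingsOn G s).filter (v ∈ covered ·), matchingTerm G s M
      = -∑ u ∈ s.filter (G.Adj v), lapMatchOn G ((s.erase v).erase u) := by
  simp only [lapMatchOn, ← sum_neg_distrib]
  rw [sum_sigma']
  refine (sum_bij (fun x _ => insert s(v, x.1) x.2) ?_ ?_ ?_ ?_).symm
  · rintro ⟨u, M⟩ hx
    obtain ⟨hu, hM⟩ := mem_sigma.1 hx
    obtain ⟨hus, hadj⟩ := mem_filter.1 hu
    exact mem_filter.2 ⟨insert_mem_matchingsOn hadj hv hus hM,
      by rw [covered_insert_mk]; exact mem_insert_self _ _⟩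
  · rintro ⟨u₁, M₁⟩ h₁ ⟨u₂, M₂⟩ h₂ heq
    obtain ⟨rfl, rfl⟩ := eq_of_insert_mk_eq_insert_mk
      (notMem_covered_of_mem_matchingsOn_erase (mem_sigma.1 h₁).2)
      (notMem_covered_of_mem_matchingsOn_erase (mem_sigma.1 h₂).2) heq
    rfl
  · intro M hM
    obtain ⟨hM, hvM⟩ := mem_filter.1 hM
    obtain ⟨e, he, hve⟩ := mem_covered.1 hvM
    obtain ⟨u, rfl⟩ := Sym2.mem_iff_exists.1 hve
    have hadj : G.Adj v u := by
      simpa using (mem_matchings.1 (mem_matchingsOn.1 hM).1).1 he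
    have hus : u ∈ s := (mem_matchingsOn.1 hM).2 (mem_covered.2 ⟨_, he, Sym2.mem_mk_right v u⟩)
    exact ⟨⟨u, M.erase s(v, u)⟩, mem_sigma.2 ⟨mem_filter.2 ⟨hus, hadj⟩,
      erase_mem_matchingsOn hM he⟩, insert_erase he⟩
  · rintro ⟨u, M⟩ hx
    exact (matchingTerm_insert_mk (mem_sigma.1 hx).2).symm

theorem lapMatchOn_eq_of_mem {s : Finset V} {v : V} (hv : v ∈ s) :
    lapMatchOn G s = (X - C (G.degree v : ℝ)) * lapMatchOn G (s.erase v)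
      - ∑ u ∈ s.filter (G.Adj v), lapMatchOn G ((s.erase v).erase u) := by
  rw [lapMatchOn, ← sum_filter_not_add_sum_filter _ (v ∈ covered ·),
    sum_matchingTerm_filter_notMem_covered hv, sum_matchingTerm_filter_mem_covered hv]
  ring

variable (G) in
lemma lapMatchOn_empty : lapMatchOn G ∅ = 1 := by
  have : matchingsOn G ∅ = {∅} := by
    ext M
    simp only [mem_matchingsOn, subset_empty, mem_singleton]
    refine ⟨fun ⟨_, h⟩ => eq_empty_of_forall_notMem fun e he => ?_, ?_⟩
    · induction e with
      | _ a b => exact notMem_empty a (h ▸ mem_covered.2 ⟨_, he, Sym2.mem_mk_left a b⟩)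
    · rintro rfl
      simp [matchings, covered]
  simp [lapMatchOn, this, matchingTerm]

lemma signedEval_eq_of_mem {s : Finset V} {v : V} (hv : v ∈ s) (x : ℝ) :
    signedEval G s x = ((G.degree v : ℝ) - x) * signedEval G (s.erase v) x
      - ∑ u ∈ s.filter (G.Adj v), signedEval G ((s.erase v).erase u) x := by
  have hcard : #s = #(s.erase v) + 1 := (card_erase_add_one hv).symm
  have hterm : ∀ u ∈ s.filter (G.Adj v),
      (-1 : ℝ) ^ #s * (lapMatchOn G ((s.erase v).erase u)).eval x
        = signedEval G ((s.erase v).erase u) x := fun u hu => by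
    obtain ⟨hus, hadj⟩ := mem_filter.1 hu
    rw [signedEval, hcard, ← card_erase_add_one (mem_erase.2 ⟨hadj.ne', hus⟩), pow_add, pow_add]
    norm_num
  rw [signedEval, lapMatchOn_eq_of_mem hv, eval_sub, eval_mul, eval_finsetSum, mul_sub, mul_sum,
    sum_congr rfl hterm, signedEval, hcard, pow_succ]
  simp only [eval_sub, eval_X, eval_C]
  ring

theorem signedEval_pos_and_le {x : ℝ} (hx : x < 0) (s : Finset V) :
    0 < signedEval G s x ∧
      ∀ v ∈ s, ∀ w ∉ s, G.Adj v w → signedEval G (s.erase v) x ≤ signedEval G s x := by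
  induction s using Finset.strongInduction with
  | H s ih =>
  have hbound : ∀ v ∈ s, ((G.degree v : ℝ) - #(s.filter (G.Adj v)) - x)
      * signedEval G (s.erase v) x ≤ signedEval G s x := fun v hv => by
    have hle : ∀ u ∈ s.filter (G.Adj v),
        signedEval G ((s.erase v).erase u) x ≤ signedEval G (s.erase v) x := fun u hu => by
      obtain ⟨hus, hadj⟩ := mem_filter.1 hu
      exact (ih _ (erase_ssubset hv)).2 u (mem_erase.2 ⟨hadj.ne', hus⟩) v (notMem_erase v s)
        hadj.symm
    have := sum_le_sum hle
    rw [sum_const, nsmul_eq_mul] at this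
    rw [signedEval_eq_of_mem hv]
    linarith
  refine ⟨?_, fun v hv w hw hvw => ?_⟩
  · rcases s.eq_empty_or_nonempty with rfl | ⟨v, hv⟩
    · simp [signedEval, lapMatchOn_empty]
    have hpos := (ih _ (erase_ssubset hv)).1
    have hdeg : (#(s.filter (G.Adj v)) : ℝ) ≤ G.degree v := by
      exact_mod_cast card_filter_adj_le_degree s v
    nlinarith [hbound v hv]
  · have hpos := (ih _ (erase_ssubset hv)).1
    have hdeg : (#(s.filter (G.Adj v)) : ℝ) + 1 ≤ G.degree v := by
      exact_mod_cast card_filter_adj_add_one_le_degree hw hvw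
    nlinarith [hbound v hv]

variable (G) in
lemma lapMatchOn_ne_zero (s : Finset V) : lapMatchOn G s ≠ 0 := fun h => by
  simpa [signedEval, h] using (signedEval_pos_and_le (G := G) neg_one_lt_zero s).1

lemma nonneg_of_isRoot_lapMatchOn {s : Finset V} {θ : ℝ} (h : (lapMatchOn G s).IsRoot θ) :
    0 ≤ θ := by
  by_contra! hθ
  simpa [signedEval, h.eq_zero] using (signedEval_pos_and_le (G := G) hθ s).1

variable (G) in
theorem exists_posPartialFrac_lapMatchOn (s : Finset V) {v : V} (hv : v ∈ s) :
    ∃ Θ c, PosPartialFrac (lapMatchOn G (s.erase v)) (lapMatchOn G s) Θ c ∧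
      ∀ w (p : G.Walk v w), p.IsPath → (∀ x ∈ p.support, x ∈ s) → p.length < #Θ := by
  induction s using Finset.strongInduction generalizing v with
  | H s ih =>
  set N := s.filter (G.Adj v)
  have hnbr : ∀ u, ∃ Θ c, u ∈ N →
      PosPartialFrac (lapMatchOn G ((s.erase v).erase u)) (lapMatchOn G (s.erase v)) Θ c ∧
      ∀ w (p : G.Walk u w), p.IsPath → (∀ x ∈ p.support, x ∈ s.erase v) → p.length < #Θ := by
    intro u
    by_cases hu : u ∈ N
    · obtain ⟨hus, hadj⟩ := mem_filter.1 hu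
      obtain ⟨Θ, c, h⟩ := ih _ (erase_ssubset hv) (mem_erase.2 ⟨hadj.ne', hus⟩)
      exact ⟨Θ, c, fun _ => h⟩
    · exact ⟨∅, 0, fun h => (hu h).elim⟩
  choose Θ c hΘ using hnbr
  obtain ⟨Ξ, d, hcard, hΞ⟩ := (PosPartialFrac.sum fun u hu => (hΘ u hu).1).step (G.degree v : ℝ)
  rw [← lapMatchOn_eq_of_mem hv] at hΞ
  refine ⟨Ξ, d, hΞ, ?_⟩
  rintro w (_ | ⟨hadj, q⟩) hp hps
  · simp [hcard]
  · rw [SimpleGraph.Walk.cons_isPath_iff] at hp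
    have hu : _ ∈ N := mem_filter.2 ⟨hps _ (by simp), hadj⟩
    have hq := (hΘ _ hu).2 w q hp.1 fun x hx =>
      mem_erase.2 ⟨fun h => hp.2 (h ▸ hx), hps x (by simp [hx])⟩
    have := card_le_card (subset_biUnion_of_mem Θ hu)
    rw [SimpleGraph.Walk.length_cons, hcard]
    omega

end Graph

lemma card_le_card_filter_pos_add_one {S : Finset ℝ} (hS : ∀ x ∈ S, 0 ≤ x) :
    #S ≤ #(S.filter (0 < ·)) + 1 := by
  refine (card_le_card fun x hx => ?_).trans (card_insert_le 0 _)
  rcases (hS x hx).eq_or_lt with h | h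
  · exact h ▸ mem_insert_self _ _
  · exact mem_insert_of_mem (mem_filter.2 ⟨hx, h⟩)

theorem lapMatch_card_distinct_pos_roots_general [Fintype V] [DecidableEq V] (G : SimpleGraph V)
    [DecidableRel G.Adj] {a b : V} (p : G.Walk a b) (hp : p.IsPath) :
    p.length ≤ (((lapMatch G).roots.toFinset.filter (fun r => 0 < r)).card) := by
  obtain ⟨Θ, c, hΘ, hlen⟩ := exists_posPartialFrac_lapMatchOn G univ (mem_univ a)
  rw [lapMatch_eq_lapMatchOn_univ]
  have hroots : Θ ⊆ (lapMatchOn G univ).roots.toFinset := fun θ hθ => by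
    rw [Multiset.mem_toFinset, mem_roots (lapMatchOn_ne_zero G univ)]
    exact hΘ.isRoot hθ
  have hnonneg : ∀ θ ∈ (lapMatchOn G univ).roots.toFinset, 0 ≤ θ := fun θ hθ =>
    nonneg_of_isRoot_lapMatchOn (isRoot_of_mem_roots (Multiset.mem_toFinset.1 hθ))
  have := hlen b p hp fun _ _ => mem_univ _
  have := card_le_card hroots
  have := card_le_card_filter_pos_add_one hnonneg
  omega

/-- For a finite connected graph `G`, the Laplacian matching polynomial
`𝓛𝓜(G, x)` has at least `ℓ(G)` distinct positive real roots, where `ℓ(G)` is the length of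
a longest path in `G`.  Equivalently (as stated here): for every path `p` of `G`, the number
of distinct positive real roots of `𝓛𝓜(G, x)` is at least the length of `p`. -/
theorem lapMatch_card_distinct_pos_roots [Fintype V] [DecidableEq V] (G : SimpleGraph V)
    [DecidableRel G.Adj] (hG : G.Connected) {a b : V} (p : G.Walk a b) (hp : p.IsPath) :
    p.length ≤ (((lapMatch G).roots.toFinset.filter (fun r => 0 < r)).card) :=
  lapMatch_card_distinct_pos_roots_general G p hp

end LM
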